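/- Let k ≥ 3 and let m ≥ C(k,2) − 1 be an integer. Write m = C(k−1,2) + a(k−1) + b with a ≥ 0, 0 ≤ b ≤ k−2, and m = C(k−2,2) + a'(k−2) + b' with a' ≥ 2, 0 ≤ b' ≤ k−3; note that m' = m + (k−1)(k−2) has parameter representations (a + k−2, b) and (a' + k−1, b') respectively. Then H(k, a+k−2, b) − H(k−1, a'+k−1, b') ≥ H(k, a, b) − H(k−1, a', b'), i.e. h(C(m',k)) − h(C(m',k−1)) ≥ h(C(m,k)) − h(C(m,k−1)); moreover this inequality is strict when m = C(k,2) − 1. -/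

import Mathlib

/-!
Write `k = n + 2` and `P = (n + 1) n` for the common period. Multiplying the increment
`H (j + 1) (a + d) b - H (j + 1) a b` by `j` and rescaling every argument of `f` by `j` through
`f (c x) = c f x + c x log c`, the logarithmic terms cancel and the increment becomes
`b φ (X + j) + (j - b) φ X` with `φ s = f (s + P) - f s` and `X = j (j - 1 + a)`.
For `j = n + 1` this is an average of `φ` over `{X, X + n + 1}`, for `j = n` one over
`{Y, Y + n}`, and the two representations of `m` say exactly that `Y + n = X + b - b'`.
Strict convexity of `f` makes `φ` strictly increasing, and in both cases `b ≤ b'` and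
`b' + 1 ≤ b` the weights on `{Y, Y + n}` are strictly stochastically dominated by those on
`{X, X + n + 1}`.
-/

/-- `f x = x * log x` (note `Real.log 0 = 0`, so `f 0 = 0`). -/
noncomputable def f (x : ℝ) : ℝ := x * Real.log x

/-- `H k a b = h(C(m,k))` for `m = C(k-1,2) + a(k-1) + b`. -/
noncomputable def H (k a b : ℕ) : ℝ :=
  b * f ((k : ℝ) - 1 + a) + ((k : ℝ) - 1 - b) * f ((k : ℝ) - 2 + a) +
    a * f ((k : ℝ) - 1) + f b

open Real Set

theorem StrictConvexOn.add_sub_lt_add_sub {𝕜 : Type*} [Field 𝕜] [LinearOrder 𝕜]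
    [IsStrictOrderedRing 𝕜] {D : Set 𝕜} {g : 𝕜 → 𝕜} (hg : StrictConvexOn 𝕜 D g) {x y d : 𝕜}
    (hx : x ∈ D) (hyd : y + d ∈ D) (hd : 0 < d) (hxy : x < y) :
    g (x + d) - g x < g (y + d) - g y := by
  have h := (hg.secant_strict_mono_aux2 (y := x + d) hx hyd (by linarith) (by linarith)).trans
    (hg.secant_strict_mono_aux3 hx hyd hxy (by linarith))
  rwa [add_sub_cancel_left, add_sub_cancel_left, div_lt_div_iff_of_pos_right hd] at h

lemma f_mul {c : ℝ} (hc : c ≠ 0) (x : ℝ) : f (c * x) = c * f x + c * x * log c := by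
  rcases eq_or_ne x 0 with rfl | hx
  · simp [f]
  · simp only [f]
    rw [log_mul hc hx]
    ring

lemma strictMonoOn_f_add_sub {P : ℝ} (hP : 0 < P) :
    StrictMonoOn (fun s => f (s + P) - f s) (Ici 0) := fun _ hx _ hy hxy =>
  (strictConvexOn_mul_log : StrictConvexOn ℝ (Ici 0) f).add_sub_lt_add_sub hx
    (add_nonneg hy hP.le) hP hxy

lemma mul_H_add_sub_H (j a b d : ℕ) (hj : j ≠ 0) :
    (j : ℝ) * (H (j + 1) (a + d) b - H (j + 1) a b) =
      b * (f (j * (j - 1 + a) + j + j * d) - f (j * (j - 1 + a) + j)) +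
        (j - b) * (f (j * (j - 1 + a) + j * d) - f (j * (j - 1 + a))) := by
  have hj' : (j : ℝ) ≠ 0 := by exact_mod_cast hj
  rw [show (j : ℝ) * (j - 1 + a) + j + j * d = j * (j + a + d) by ring,
    show (j : ℝ) * (j - 1 + a) + j = j * (j + a) by ring,
    show (j : ℝ) * (j - 1 + a) + j * d = j * (j - 1 + a + d) by ring,
    f_mul hj', f_mul hj', f_mul hj', f_mul hj']
  simp only [H, f, Nat.cast_add, Nat.cast_one]
  ring_nf

theorem two_point_average_lt {g : ℝ → ℝ} (hg : StrictMonoOn g (Ici 0)) {n β β' x y : ℝ}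
    (hβ : 0 ≤ β) (hβn : β ≤ n) (hβ' : 0 ≤ β') (hβ'n : β' < n) (hy : 0 ≤ y)
    (hxy : y + n = x + β - β') (hββ' : β ≤ β' ∨ β' + 1 ≤ β) :
    (n + 1) * (β' * g (y + n) + (n - β') * g y) <
      n * (β * g (x + (n + 1)) + (n + 1 - β) * g x) := by
  have hx : 0 ≤ x := by linarith
  have hgx : g x < g (x + (n + 1)) := hg hx (by simp only [mem_Ici]; linarith) (by linarith)
  rcases hββ' with hle | hlt
  · have h1 : g (y + n) ≤ g x :=
      hg.monotoneOn (by simp only [mem_Ici]; linarith) hx (by linarith)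
    have h2 : g y < g x := hg hy hx (by linarith)
    nlinarith [mul_le_mul_of_nonneg_left h1 hβ', mul_lt_mul_of_pos_left h2 (sub_pos.2 hβ'n),
      mul_le_mul_of_nonneg_left hgx.le hβ]
  · have h1 : g (y + n) ≤ g (x + (n + 1)) :=
      hg.monotoneOn (by simp only [mem_Ici]; linarith) (by simp only [mem_Ici]; linarith)
        (by linarith)
    have h2 : g y ≤ g x := hg.monotoneOn hy hx (by linarith)
    have hcoef : 0 < n * β - (n + 1) * β' := by nlinarith
    nlinarith [mul_le_mul_of_nonneg_left h1 hβ', mul_le_mul_of_nonneg_left h2 (sub_pos.2 hβ'n).le,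
      mul_lt_mul_of_pos_left hgx hcoef]

theorem difference_grows_with_period_general (k m a b a' b' : ℕ) (hk : 3 ≤ k)
    (hb : b ≤ k - 2) (hb' : b' ≤ k - 3)
    (hrep : m = (k - 1).choose 2 + a * (k - 1) + b)
    (hrep' : m = (k - 2).choose 2 + a' * (k - 2) + b') :
    H k a b - H (k - 1) a' b' ≤ H k (a + k - 2) b - H (k - 1) (a' + k - 1) b' ∧
    (m = k.choose 2 - 1 →
      H k a b - H (k - 1) a' b' < H k (a + k - 2) b - H (k - 1) (a' + k - 1) b') := by
  obtain ⟨n, rfl⟩ : ∃ n, k = n + 1 + 1 := ⟨k - 2, by omega⟩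
  have hn : (1 : ℝ) ≤ n := by exact_mod_cast (by omega : 1 ≤ n)
  simp only [Nat.add_sub_cancel, show n + 1 + 1 - 2 = n by omega,
    show a + (n + 1 + 1) - 2 = a + n by omega, show a' + (n + 1 + 1) - 1 = a' + (n + 1) by omega]
    at hb hrep hrep' ⊢
  have e1 := mul_H_add_sub_H (n + 1) a b n (by omega)
  have e2 := mul_H_add_sub_H n a' b' (n + 1) (by omega)
  push_cast at e1 e2
  rw [mul_comm (n : ℝ) ((n : ℝ) + 1)] at e2
  have hrel : (n : ℝ) * (n - 1 + a') + n = (n + 1) * (n + 1 - 1 + a) + b - b' := by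
    have := congrArg (Nat.cast : ℕ → ℝ) (hrep.symm.trans hrep')
    push_cast [Nat.cast_choose_two] at this
    linear_combination -this
  have hcase : (b : ℝ) ≤ b' ∨ (b' : ℝ) + 1 ≤ b := by
    rcases le_or_gt b b' with h | h
    · exact .inl (by exact_mod_cast h)
    · exact .inr (by exact_mod_cast h)
  have core := two_point_average_lt (strictMonoOn_f_add_sub (P := (n + 1) * n) (by positivity))
    (Nat.cast_nonneg b) (by exact_mod_cast hb) (Nat.cast_nonneg b')
    (by exact_mod_cast (by omega : b' < n)) (mul_nonneg (by positivity) (by linarith)) hrel hcase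
  have hΔ : H (n + 1) (a' + (n + 1)) b' - H (n + 1) a' b' <
      H (n + 1 + 1) (a + n) b - H (n + 1 + 1) a b := by
    refine lt_of_mul_lt_mul_left (a := ((n : ℝ) + 1) * n) ?_ (by positivity)
    linear_combination core + ((n : ℝ) + 1) * e2 - (n : ℝ) * e1
  exact ⟨by linarith, fun _ => by linarith⟩

/-- For `k ≥ 3` and `m ≥ C(k,2) - 1`, with `m = C(k-1,2) + a(k-1) + b` (`a ≥ 0`,
`0 ≤ b ≤ k-2`) and `m = C(k-2,2) + a'(k-2) + b'` (`a' ≥ 2`, `0 ≤ b' ≤ k-3`), and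
`m' = m + (k-1)(k-2)` having representations `(a+k-2, b)` and `(a'+k-1, b')`:
`h(C(m',k)) - h(C(m',k-1)) ≥ h(C(m,k)) - h(C(m,k-1))`, with strict inequality when
`m = C(k,2) - 1`. -/
theorem difference_grows_with_period (k m a b a' b' : ℕ) (hk : 3 ≤ k)
    (hm : k.choose 2 - 1 ≤ m) (hb : b ≤ k - 2) (ha' : 2 ≤ a') (hb' : b' ≤ k - 3)
    (hrep : m = (k - 1).choose 2 + a * (k - 1) + b)
    (hrep' : m = (k - 2).choose 2 + a' * (k - 2) + b') :
    H k a b - H (k - 1) a' b' ≤ H k (a + k - 2) b - H (k - 1) (a' + k - 1) b' ∧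
    (m = k.choose 2 - 1 →
      H k a b - H (k - 1) a' b' < H k (a + k - 2) b - H (k - 1) (a' + k - 1) b') :=
  difference_grows_with_period_general k m a b a' b' hk hb hb' hrep hrep'
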